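/- Let n ≥ 2 and let ρ^{(1)}, …, ρ^{(n)} be arbitrary two-qubit density operators (positive semidefinite matrices with trace 1 on ℂ^2 ⊗ ℂ^2), with ρ^{(i)} placed on registers (A_i, B_i). Let 𝓛 be the completely positive map from 2n qubits to n+1 qubits given by 𝓛(ρ) = Σ_{β ∈ {0,1}^{n−1}} M_β ρ M_β†, where M_β = ( I_{A_1} ⊗ ⟨β|_{A_2…A_n} ⊗ X^{β_1}_{B_2} ⊗ … ⊗ X^{β_{n−1}}_{B_n} ) ( CNOT_n on A_1…A_n ⊗ I_{B_1…B_n} ). Then the fidelity of the output state with respect to the GHZ state satisfies ⟨GHZ_{n+1}| 𝓛(ρ^{(1)} ⊗ ρ^{(2)} ⊗ … ⊗ ρ^{(n)}) |GHZ_{n+1}⟩ = Σ_{z ∈ {0,1}^{n−1}} μ^{(1)}_{z'} · μ^{(2)}_{z_1} · μ^{(3)}_{z_2} · … · μ^{(n)}_{z_{n−1}}, where z' = z_1 ⊕ … ⊕ z_{n−1} and μ^{(i)}_z = ⟨Φ^{z,0}| ρ^{(i)} |Φ^{z,0}⟩. -/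

import Mathlib

open Matrix
open scoped ComplexOrder

/-- Basis labels for registers `A_1, …, A_n, B_1, …, B_n` (`n = n' + 2`). -/
abbrev PairBasis (n : ℕ) : Type := (Fin n → Fin 2) × (Fin n → Fin 2)

/-- Basis labels for the output registers `A_1, B_1, …, B_n`. -/
abbrev OutBasis (n : ℕ) : Type := Fin 2 × (Fin n → Fin 2)

/-- Amplitude of `|GHZ_{n+1}⟩` on registers `A_1, B_1, …, B_n`. -/
noncomputable def ghzA1B (n : ℕ) : OutBasis (n + 2) → ℂ := fun u =>
  ((if u.1 = 0 ∧ u.2 = fun _ => 0 then 1 else 0) +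
      (if u.1 = 1 ∧ u.2 = fun _ => 1 then 1 else 0)) / (Real.sqrt 2 : ℂ)

/-- Amplitude of the Bell basis state `|Φ^{z,x}⟩ = (Z^z X^x ⊗ I)|Φ⟩` at `(u, v)`. -/
noncomputable def bellBasisAmp (z x : Fin 2) (u v : Fin 2) : ℂ :=
  if u = v + x then (-1) ^ (z.val * u.val) * ((Real.sqrt 2 : ℂ))⁻¹ else 0

/-- The Bell basis vector `|Φ^{z,0}⟩` as a two-qubit state vector. -/
noncomputable def bellVec (z : Fin 2) : Fin 2 × Fin 2 → ℂ :=
  fun uv => bellBasisAmp z 0 uv.1 uv.2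

/-- `CNOT_n ⊗ I_B`: `|0⟩⟨0| ⊗ I^{⊗(n-1)} + |1⟩⟨1| ⊗ X^{⊗(n-1)}` on the `A`
registers (control `A_1`), identity on the `B` registers. -/
noncomputable def cnotA (n : ℕ) : Matrix (PairBasis (n + 2)) (PairBasis (n + 2)) ℂ :=
  Matrix.of fun p q =>
    if p.2 = q.2 ∧ p.1 0 = q.1 0 ∧ (∀ i, i ≠ 0 → p.1 i = q.1 i + q.1 0)
    then (1 : ℂ) else 0

/-- The correction operator `⊗_{i=1}^{n-1} X^{β_i}_{B_{i+1}}`. -/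
noncomputable def xCorrB (n : ℕ) (β : Fin (n + 1) → Fin 2) :
    Matrix (PairBasis (n + 2)) (PairBasis (n + 2)) ℂ :=
  Matrix.of fun p q =>
    if p.1 = q.1 ∧ (∀ j, p.2 j = q.2 j + (Fin.cons 0 β : Fin (n + 2) → Fin 2) j)
    then (1 : ℂ) else 0

/-- The Kraus operator
`M_β = (I_{A_1} ⊗ ⟨β|_{A_2 ⋯ A_n} ⊗ X^{β_1}_{B_2} ⊗ ⋯ ⊗ X^{β_{n-1}}_{B_n})(CNOT_n ⊗ I_B)`:
apply `CNOT_n` on the `A` registers and the `X` corrections on the `B` registers,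
then contract `A_2, …, A_n` with the computational bra `⟨β|`. -/
noncomputable def krausM (n : ℕ) (β : Fin (n + 1) → Fin 2) :
    Matrix (OutBasis (n + 2)) (PairBasis (n + 2)) ℂ :=
  Matrix.of fun o p => (xCorrB n β * cnotA n) ((Fin.cons o.1 β, o.2)) p

/-- The LOCC channel `𝓛(ρ) = ∑_{β ∈ {0,1}^{n-1}} M_β ρ M_β†` of Protocol 2. -/
noncomputable def channelL (n : ℕ) (ρ : Matrix (PairBasis (n + 2)) (PairBasis (n + 2)) ℂ) :
    Matrix (OutBasis (n + 2)) (OutBasis (n + 2)) ℂ :=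
  ∑ β : Fin (n + 1) → Fin 2, krausM n β * ρ * (krausM n β)ᴴ

/-- The tensor product `ρ⁽¹⁾ ⊗ ⋯ ⊗ ρ⁽ⁿ⁾` of two-qubit states, `ρ⁽ⁱ⁾` on `(A_i, B_i)`. -/
noncomputable def prodState (n : ℕ)
    (ρ : Fin (n + 2) → Matrix (Fin 2 × Fin 2) (Fin 2 × Fin 2) ℂ) :
    Matrix (PairBasis (n + 2)) (PairBasis (n + 2)) ℂ :=
  Matrix.of fun p q => ∏ i, ρ i (p.1 i, p.2 i) (q.1 i, q.2 i)

/-- The overlap `μ_z = ⟨Φ^{z,0}| ρ |Φ^{z,0}⟩` of a two-qubit state with `|Φ^{z,0}⟩`. -/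
noncomputable def mu (ρ : Matrix (Fin 2 × Fin 2) (Fin 2 × Fin 2) ℂ) (z : Fin 2) : ℂ :=
  star (bellVec z) ⬝ᵥ ρ.mulVec (bellVec z)

/-!
Only the two GHZ branches `|s⟩_{A_1} |s⋯s⟩_B` contribute: `M_β†` maps such a branch to the basis
state in which both the `A` and the `B` registers carry `c = (s, s ⊕ β_1, …, s ⊕ β_{n-1})`.
For a product state the sum over `β` then factorises, and the fidelity is
`½ ∑_d ν⁽¹⁾_d ∏_{i ≥ 2} ν⁽ⁱ⁾_d` with `ν_d = ∑_a ρ(aa, (a ⊕ d)(a ⊕ d))`. On the other side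
`μ_z = (ν_0 + (-1)^z ν_1) / 2`, and since `(-1)^{z'} = ∏ (-1)^{z_i}`, summing the expanded
product over `z` kills every term except the same two.
-/

def bitSign (x : Fin 2) : ℂ := if x = 0 then 1 else -1

lemma bitSign_add (x y : Fin 2) : bitSign (x + y) = bitSign x * bitSign y := by
  fin_cases x <;> fin_cases y <;> simp [bitSign]

lemma bitSign_mul_self (x : Fin 2) : bitSign x * bitSign x = 1 := by
  fin_cases x <;> simp [bitSign]

lemma star_bitSign (x : Fin 2) : star (bitSign x) = bitSign x := by
  fin_cases x <;> simp [bitSign]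

lemma bitSign_sum {ι : Type*} (s : Finset ι) (z : ι → Fin 2) :
    bitSign (∑ i ∈ s, z i) = ∏ i ∈ s, bitSign (z i) := by
  classical
  induction s using Finset.induction_on with
  | empty => simp [bitSign]
  | insert _ _ h ih => rw [Finset.sum_insert h, Finset.prod_insert h, bitSign_add, ih]

lemma sum_bitSign_add_mul_self (x y : ℂ) : ∑ w : Fin 2, (x + bitSign w * y) = 2 * x := by
  simp only [Fin.sum_univ_two, bitSign, ↓reduceIte, one_ne_zero]
  ring

lemma sum_bitSign_mul_prod {m : ℕ} (a b : ℂ) (a' b' : Fin m → ℂ) :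
    ∑ z : Fin m → Fin 2, (a + bitSign (∑ i, z i) * b) * ∏ i, (a' i + bitSign (z i) * b' i)
      = 2 ^ m * (a * ∏ i, a' i + b * ∏ i, b' i) := by
  have expand : ∀ z : Fin m → Fin 2,
      (a + bitSign (∑ i, z i) * b) * ∏ i, (a' i + bitSign (z i) * b' i)
        = a * ∏ i, (a' i + bitSign (z i) * b' i) + b * ∏ i, (b' i + bitSign (z i) * a' i) := by
    intro z
    rw [add_mul, mul_comm (bitSign _) b, mul_assoc, bitSign_sum, ← Finset.prod_mul_distrib]
    congr 2
    refine Finset.prod_congr rfl fun i _ => ?_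
    linear_combination b' i * bitSign_mul_self (z i)
  simp only [expand, Finset.sum_add_distrib, ← Finset.mul_sum]
  rw [← Fintype.prod_sum (fun i w => a' i + bitSign w * b' i),
    ← Fintype.prod_sum (fun i w => b' i + bitSign w * a' i)]
  simp only [sum_bitSign_add_mul_self, Finset.prod_mul_distrib, Finset.prod_const,
    Finset.card_univ, Fintype.card_fin]
  ring

lemma star_inv_sqrt_two_mul_inv_sqrt_two :
    star ((Real.sqrt 2 : ℂ))⁻¹ * ((Real.sqrt 2 : ℂ))⁻¹ = 2⁻¹ := by
  rw [star_inv₀, Complex.star_def, Complex.conj_ofReal, ← mul_inv, ← Complex.ofReal_mul,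
    Real.mul_self_sqrt zero_le_two]
  norm_num

lemma star_sum_smul_single_dotProduct_mulVec {R ι κ : Type*} [CommSemiring R] [StarRing R]
    [Fintype ι] [DecidableEq ι] [Fintype κ] (A : Matrix ι ι R) (P : κ → ι) (c : κ → R) :
    star (∑ s, c s • Pi.single (P s) (1 : R)) ⬝ᵥ A *ᵥ ∑ t, c t • Pi.single (P t) 1
      = ∑ s, ∑ t, star (c s) * A (P s) (P t) * c t := by
  simp only [star_sum, sum_dotProduct, mulVec_sum, dotProduct_sum, star_smul, mulVec_smul,
    smul_dotProduct, dotProduct_smul, mulVec_single_one, Pi.star_single, star_one,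
    single_dotProduct, one_mul, smul_eq_mul, Finset.mul_sum, col_apply]
  rw [Finset.sum_comm]
  exact Finset.sum_congr rfl fun _ _ => Finset.sum_congr rfl fun _ _ => by ring

lemma star_dotProduct_mul_mul_conjTranspose_mulVec {R m n : Type*} [CommSemiring R]
    [StarRing R] [Fintype m] [Fintype n] (v : m → R) (K : Matrix m n R) (A : Matrix n n R) :
    star v ⬝ᵥ (K * A * Kᴴ) *ᵥ v = star (Kᴴ *ᵥ v) ⬝ᵥ A *ᵥ (Kᴴ *ᵥ v) := by
  rw [← mulVec_mulVec, ← mulVec_mulVec, dotProduct_mulVec, star_mulVec,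
    conjTranspose_conjTranspose]

section Coherence

variable (σ : Matrix (Fin 2 × Fin 2) (Fin 2 × Fin 2) ℂ)

/-- `coherence σ 0` is the weight of `σ` on `span {|00⟩, |11⟩}`, `coherence σ 1` its coherence
between `|00⟩` and `|11⟩`; these are the `ν_d` above. -/
def coherence (d : Fin 2) : ℂ :=
  ∑ a : Fin 2, σ (a, a) (a + d, a + d)

lemma sum_sum_mul_eq_sum_coherence (F : Fin 2 → ℂ) :
    ∑ s : Fin 2, ∑ t : Fin 2, σ (s, s) (t, t) * F (s + t) = ∑ d, coherence σ d * F d := by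
  simp only [coherence, Finset.sum_mul]
  symm
  rw [Finset.sum_comm]
  refine Finset.sum_congr rfl fun s _ => Fintype.sum_equiv (Equiv.addLeft s) _ _ fun d => ?_
  have h : s + (s + d) = d := by decide +revert
  simp [h]

lemma sum_shift_eq_coherence (s t : Fin 2) :
    ∑ b : Fin 2, σ (s + b, s + b) (t + b, t + b) = coherence σ (s + t) := by
  refine Fintype.sum_equiv (Equiv.addLeft s) _ _ fun b => ?_
  have h : t + b = s + b + (s + t) := by decide +revert
  simp [h]

lemma bellVec_eq_sum_smul_single (z : Fin 2) :
    bellVec z = ∑ a : Fin 2, (((Real.sqrt 2 : ℂ))⁻¹ * bitSign (z * a)) • Pi.single (a, a) 1 := by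
  ext ⟨u, v⟩
  fin_cases z <;> fin_cases u <;> fin_cases v <;>
    simp [bellVec, bellBasisAmp, bitSign, Fin.sum_univ_two]

lemma mu_eq_coherence (z : Fin 2) :
    mu σ z = (coherence σ 0 + bitSign z * coherence σ 1) / 2 := by
  have h : ∀ a b : Fin 2,
      star (((Real.sqrt 2 : ℂ))⁻¹ * bitSign (z * a)) * σ (a, a) (b, b)
          * (((Real.sqrt 2 : ℂ))⁻¹ * bitSign (z * b))
        = σ (a, a) (b, b) * bitSign (z * (a + b)) / 2 := by
    intro a b
    rw [star_mul', star_bitSign, mul_add, bitSign_add]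
    linear_combination σ (a, a) (b, b) * bitSign (z * a) * bitSign (z * b)
      * star_inv_sqrt_two_mul_inv_sqrt_two
  calc mu σ z = (∑ a : Fin 2, ∑ b : Fin 2, σ (a, a) (b, b) * bitSign (z * (a + b))) / 2 := by
        rw [mu, bellVec_eq_sum_smul_single, star_sum_smul_single_dotProduct_mulVec]
        simp only [h, Finset.sum_div]
    _ = (∑ d, coherence σ d * bitSign (z * d)) / 2 := by
        rw [sum_sum_mul_eq_sum_coherence σ fun d => bitSign (z * d)]
    _ = (coherence σ 0 + bitSign z * coherence σ 1) / 2 := by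
        simp [Fin.sum_univ_two, bitSign]

end Coherence

lemma sum_mu_mul_prod_mu {m : ℕ} (σ₀ : Matrix (Fin 2 × Fin 2) (Fin 2 × Fin 2) ℂ)
    (σ : Fin m → Matrix (Fin 2 × Fin 2) (Fin 2 × Fin 2) ℂ) :
    ∑ z : Fin m → Fin 2, mu σ₀ (∑ i, z i) * ∏ i, mu (σ i) (z i)
      = (∑ d, coherence σ₀ d * ∏ i, coherence (σ i) d) / 2 := by
  simp only [mu_eq_coherence, Finset.prod_div_distrib, Finset.prod_const, Finset.card_univ,
    Fintype.card_fin, div_mul_div_comm, ← Finset.sum_div, sum_bitSign_mul_prod, Fin.sum_univ_two]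
  field_simp

lemma fin2_eq_add_iff (a b c : Fin 2) : a = b + c ↔ b = c + a := by decide +revert

/-- The bits carried by both `A_1 ⋯ A_n` and `B_1 ⋯ B_n` once `M_β†` has been applied to the GHZ
branch `|s⟩_{A_1} |s ⋯ s⟩_B`. -/
def branchBits {n : ℕ} (s : Fin 2) (β : Fin (n + 1) → Fin 2) : Fin (n + 2) → Fin 2 :=
  Fin.cons s fun i => s + β i

lemma xCorrB_apply (n : ℕ) (β : Fin (n + 1) → Fin 2) (a b : Fin (n + 2) → Fin 2)
    (q : PairBasis (n + 2)) :
    xCorrB n β (a, b) q = if q = (a, b + Fin.cons 0 β) then 1 else 0 := by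
  simp only [xCorrB, Matrix.of_apply, Prod.ext_iff, funext_iff, Pi.add_apply]
  exact if_congr (and_congr (forall_congr' fun _ => eq_comm)
    (forall_congr' fun _ => (fin2_eq_add_iff _ _ _).trans (by rw [add_comm (b _)]))) rfl rfl

lemma cnotA_apply_cons (n : ℕ) (s : Fin 2) (β : Fin (n + 1) → Fin 2)
    (b : Fin (n + 2) → Fin 2) (p : PairBasis (n + 2)) :
    cnotA n (Fin.cons s β, b) p = if p = (branchBits s β, b) then 1 else 0 := by
  obtain ⟨p₁, p₂⟩ := p
  simp only [cnotA, Matrix.of_apply, Prod.mk.injEq, Fin.cons_zero]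
  refine if_congr
    ⟨fun ⟨h₂, h₀, h⟩ => ⟨funext fun j => Fin.cases h₀.symm (fun i => ?_) j, h₂.symm⟩,
      fun ⟨h₁, h₂⟩ => ⟨h₂.symm, ?_, fun j hj => ?_⟩⟩ rfl rfl
  · have hi := h i.succ (Fin.succ_ne_zero i)
    rw [Fin.cons_succ, fin2_eq_add_iff, ← h₀] at hi
    simp [branchBits, hi]
  · simp [h₁, branchBits]
  · obtain ⟨i, rfl⟩ := Fin.exists_succ_eq.mpr hj
    simp [h₁, branchBits, fin2_eq_add_iff]

lemma krausM_apply_const (n : ℕ) (β : Fin (n + 1) → Fin 2) (s : Fin 2)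
    (p : PairBasis (n + 2)) :
    krausM n β (s, fun _ => s) p = if p = (branchBits s β, branchBits s β) then 1 else 0 := by
  have hB : (fun _ => s) + Fin.cons 0 β = branchBits s β := by
    ext j; refine Fin.cases ?_ (fun i => ?_) j <;> simp [branchBits]
  simp [krausM, Matrix.mul_apply, xCorrB_apply, cnotA_apply_cons, hB]

lemma ghzA1B_eq_sum_smul_single (n : ℕ) :
    ghzA1B n = ∑ s : Fin 2, ((Real.sqrt 2 : ℂ))⁻¹ • Pi.single (s, fun _ => s) 1 := by
  ext ⟨a, b⟩
  simp [ghzA1B, Fin.sum_univ_two, Pi.single_apply, div_eq_inv_mul, mul_add, mul_ite]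

lemma conjTranspose_krausM_mulVec_single (n : ℕ) (β : Fin (n + 1) → Fin 2) (s : Fin 2) :
    (krausM n β)ᴴ *ᵥ Pi.single (s, fun _ => s) 1
      = Pi.single (branchBits s β, branchBits s β) 1 := by
  ext p
  simp [krausM_apply_const, Pi.single_apply]

lemma ghzA1B_fidelity_krausM (n : ℕ) (β : Fin (n + 1) → Fin 2)
    (R : Matrix (PairBasis (n + 2)) (PairBasis (n + 2)) ℂ) :
    star (ghzA1B n) ⬝ᵥ (krausM n β * R * (krausM n β)ᴴ) *ᵥ ghzA1B n
      = (∑ s, ∑ t, R (branchBits s β, branchBits s β) (branchBits t β, branchBits t β)) / 2 := by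
  have hv : (krausM n β)ᴴ *ᵥ ghzA1B n
      = ∑ s, ((Real.sqrt 2 : ℂ))⁻¹ • Pi.single (branchBits s β, branchBits s β) 1 := by
    simp only [ghzA1B_eq_sum_smul_single, mulVec_sum, mulVec_smul,
      conjTranspose_krausM_mulVec_single]
  rw [star_dotProduct_mul_mul_conjTranspose_mulVec, hv,
    star_sum_smul_single_dotProduct_mulVec (P := fun s => (branchBits s β, branchBits s β))
      (c := fun _ => ((Real.sqrt 2 : ℂ))⁻¹)]
  simp only [mul_right_comm (star _) (R _ _), star_inv_sqrt_two_mul_inv_sqrt_two,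
    ← Finset.mul_sum, div_eq_inv_mul]

lemma ghzA1B_fidelity_channelL (n : ℕ)
    (R : Matrix (PairBasis (n + 2)) (PairBasis (n + 2)) ℂ) :
    star (ghzA1B n) ⬝ᵥ (channelL n R) *ᵥ ghzA1B n
      = (∑ β, ∑ s, ∑ t,
          R (branchBits s β, branchBits s β) (branchBits t β, branchBits t β)) / 2 := by
  simp only [channelL, sum_mulVec, dotProduct_sum, ghzA1B_fidelity_krausM, Finset.sum_div]

lemma prodState_branchBits (n : ℕ)
    (ρ : Fin (n + 2) → Matrix (Fin 2 × Fin 2) (Fin 2 × Fin 2) ℂ)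
    (β : Fin (n + 1) → Fin 2) (s t : Fin 2) :
    prodState n ρ (branchBits s β, branchBits s β) (branchBits t β, branchBits t β)
      = ρ 0 (s, s) (t, t) * ∏ i, ρ i.succ (s + β i, s + β i) (t + β i, t + β i) := by
  simp [prodState, branchBits, Fin.prod_univ_succ]

lemma sum_prodState_branchBits (n : ℕ)
    (ρ : Fin (n + 2) → Matrix (Fin 2 × Fin 2) (Fin 2 × Fin 2) ℂ) :
    ∑ β, ∑ s, ∑ t,
        prodState n ρ (branchBits s β, branchBits s β) (branchBits t β, branchBits t β)
      = ∑ d, coherence (ρ 0) d * ∏ i : Fin (n + 1), coherence (ρ i.succ) d := by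
  simp only [prodState_branchBits]
  rw [Finset.sum_comm]
  refine (Finset.sum_congr rfl fun s _ => Finset.sum_comm).trans ?_
  simp only [← Finset.mul_sum]
  rw [← sum_sum_mul_eq_sum_coherence]
  refine Finset.sum_congr rfl fun s _ => Finset.sum_congr rfl fun t _ => ?_
  rw [← Fintype.prod_sum fun (i : Fin (n + 1)) (b : Fin 2) =>
    ρ i.succ (s + b, s + b) (t + b, t + b)]
  simp only [sum_shift_eq_coherence]

theorem fidelity_after_protocol2 (n : ℕ)
    (ρ : Fin (n + 2) → Matrix (Fin 2 × Fin 2) (Fin 2 × Fin 2) ℂ) :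
    star (ghzA1B n) ⬝ᵥ (channelL n (prodState n ρ)).mulVec (ghzA1B n)
      = ∑ z : Fin (n + 1) → Fin 2,
          mu (ρ 0) (∑ i, z i) * ∏ i : Fin (n + 1), mu (ρ i.succ) (z i) := by
  rw [ghzA1B_fidelity_channelL, sum_prodState_branchBits, sum_mu_mul_prod_mu]
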